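/- The monoid M₆⁽¹⁾ = ⟨a,b | ab = b⟩ is isomorphic to the submonoid of 2×2 upper triangular tropical integer matrices generated by A = [[0,-∞],[-∞,1]] and B = [[1,1],[-∞,-∞]]. -/

import Mathlib

/-- The max-plus tropical semiring `ℤ ∪ {-∞}`: tropical addition is `max`,
tropical multiplication is `+`, and `(0 : T)` is the tropical zero `-∞`. -/
abbrev T : Type := Tropical (WithTop ℤᵒᵈ)

/-- The element of the tropical semiring corresponding to the integer `k`. -/
def t (k : ℤ) : T := Tropical.trop ((OrderDual.toDual k : ℤᵒᵈ) : WithTop ℤᵒᵈ)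

/-- The defining relation of `M₆⁽¹⁾ = ⟨a, b | ab = b⟩`, with `a` encoded as `true`
and `b` as `false`. -/
def rel61 : FreeMonoid Bool → FreeMonoid Bool → Prop :=
  fun u v => u = FreeMonoid.of true * FreeMonoid.of false ∧ v = FreeMonoid.of false

def A : Matrix (Fin 2) (Fin 2) T := !![t 0, 0; 0, t 1]

def B : Matrix (Fin 2) (Fin 2) T := !![t 1, t 1; 0, 0]

/-!
Using `ab = b`, every element of `M₆⁽¹⁾` is a product `b^α a^β`. Its image `B^α A^β` is
`[[0, -∞], [-∞, β]]` when `α = 0` and `[[α, α + β], [-∞, -∞]]` when `α > 0`, and `α`, `β` can be read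
off from these entries; so `a ↦ A, b ↦ B` induces an injective homomorphism, whose range is the
submonoid generated by `A` and `B`.
-/

lemma t_mul (a b : ℤ) : t a * t b = t (a + b) := rfl

lemma t_zero : t 0 = 1 := rfl

lemma t_ne_zero (a : ℤ) : t a ≠ 0 := by
  simp [t, ← Tropical.untrop_inj_iff]

lemma t_injective : Function.Injective t := by
  intro a b h
  simpa [t] using h

section NormalForm

variable {M : Type*} [Monoid M] {a b : M}

lemma mul_pow_succ_of_mul_eq (hab : a * b = b) (n : ℕ) : a * b ^ (n + 1) = b ^ (n + 1) := by
  rw [pow_succ', ← mul_assoc, hab]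

lemma exists_eq_pow_mul_pow_of_mem_closure (hab : a * b = b) {x : M}
    (hx : x ∈ Submonoid.closure {a, b}) : ∃ α β : ℕ, x = b ^ α * a ^ β := by
  induction hx using Submonoid.closure_induction_left with
  | one => exact ⟨0, 0, by simp⟩
  | mul_left y hy x _ ih =>
    obtain ⟨α, β, rfl⟩ := ih
    rcases hy with rfl | rfl
    · cases α with
      | zero => exact ⟨0, β + 1, by simp [pow_succ']⟩
      | succ α => exact ⟨α + 1, β, by rw [← mul_assoc, mul_pow_succ_of_mul_eq hab]⟩
    · exact ⟨α + 1, β, by rw [pow_succ', mul_assoc]⟩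

end NormalForm

lemma A_mul_B : A * B = B := by
  simp [A, B, t_zero]

lemma A_pow (β : ℕ) : A ^ β = !![1, 0; 0, t β] := by
  induction β with
  | zero => simp [Matrix.one_fin_two, t_zero]
  | succ n ih =>
    rw [pow_succ, ih, A, Matrix.mul_fin_two]
    simp [t_mul, t_zero]

lemma B_pow_succ (α : ℕ) : B ^ (α + 1) = !![t (α + 1), t (α + 1); 0, 0] := by
  induction α with
  | zero => simp [B]
  | succ n ih =>
    rw [pow_succ, ih, B, Matrix.mul_fin_two]
    simp [t_mul]

lemma B_pow_succ_mul_A_pow (α β : ℕ) :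
    B ^ (α + 1) * A ^ β = !![t (α + 1), t (α + 1 + β); 0, 0] := by
  rw [B_pow_succ, A_pow, Matrix.mul_fin_two]
  simp [t_mul]

lemma B_pow_mul_A_pow_inj {α α' β β' : ℕ} (h : B ^ α * A ^ β = B ^ α' * A ^ β') :
    α = α' ∧ β = β' := by
  rcases α with _ | α <;> rcases α' with _ | α'
  · rw [pow_zero, one_mul, one_mul, A_pow, A_pow] at h
    have hβ := t_injective (by simpa using congr_fun₂ h 1 1)
    exact ⟨rfl, by exact_mod_cast hβ⟩
  · rw [pow_zero, one_mul, A_pow, B_pow_succ_mul_A_pow] at h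
    exact absurd (by simpa using congr_fun₂ h 1 1) (t_ne_zero _)
  · rw [pow_zero, one_mul, B_pow_succ_mul_A_pow, A_pow] at h
    exact absurd (by simpa using (congr_fun₂ h 1 1).symm) (t_ne_zero _)
  · rw [B_pow_succ_mul_A_pow, B_pow_succ_mul_A_pow] at h
    have hα := t_injective (by simpa using congr_fun₂ h 0 0)
    have hαβ := t_injective (by simpa using congr_fun₂ h 0 1)
    omega

lemma of_true_mul_of_false :
    PresentedMonoid.of rel61 true * PresentedMonoid.of rel61 false =
      PresentedMonoid.of rel61 false :=
  PresentedMonoid.mk_eq_mk_of_rel ⟨rfl, rfl⟩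

lemma closure_of_true_of_false :
    Submonoid.closure {PresentedMonoid.of rel61 true, PresentedMonoid.of rel61 false} = ⊤ := by
  rw [Set.pair_comm, ← Bool.range_eq, PresentedMonoid.closure_range_of]

def toMatrix : PresentedMonoid rel61 →* Matrix (Fin 2) (Fin 2) T :=
  PresentedMonoid.lift (fun x => cond x A B) (by rintro _ _ ⟨rfl, rfl⟩; simpa using A_mul_B)

lemma mrange_toMatrix : MonoidHom.mrange toMatrix = Submonoid.closure {A, B} := by
  rw [MonoidHom.mrange_eq_map, ← PresentedMonoid.closure_range_of, MonoidHom.map_mclosure,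
    ← Set.range_comp, Set.pair_comm]
  exact congrArg _ (Bool.range_eq _)

lemma exists_eq_of_false_pow_mul_of_true_pow (x : PresentedMonoid rel61) : ∃ α β : ℕ,
    x = PresentedMonoid.of rel61 false ^ α * PresentedMonoid.of rel61 true ^ β :=
  exists_eq_pow_mul_pow_of_mem_closure of_true_mul_of_false
    (closure_of_true_of_false ▸ Submonoid.mem_top x)

lemma toMatrix_injective : Function.Injective toMatrix := by
  intro x y hxy
  obtain ⟨α, β, rfl⟩ := exists_eq_of_false_pow_mul_of_true_pow x
  obtain ⟨α', β', rfl⟩ := exists_eq_of_false_pow_mul_of_true_pow y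
  obtain ⟨rfl, rfl⟩ := B_pow_mul_A_pow_inj (by simpa [toMatrix] using hxy)
  rfl

/-- The monoid `M₆⁽¹⁾ = ⟨a, b | ab = b⟩` is isomorphic to the submonoid of `2 × 2`
upper triangular tropical matrices generated by `A = [[0,-∞],[-∞,1]]` and
`B = [[1,1],[-∞,-∞]]`, via `a ↦ A`, `b ↦ B`. -/
theorem M61_iso_tropical :
    ∃ e : PresentedMonoid rel61 ≃*
        (Submonoid.closure {A, B} : Submonoid (Matrix (Fin 2) (Fin 2) T)),
      (e (PresentedMonoid.of rel61 true) : Matrix (Fin 2) (Fin 2) T) = A ∧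
        (e (PresentedMonoid.of rel61 false) : Matrix (Fin 2) (Fin 2) T) = B :=
  ⟨(MulEquiv.ofBijective toMatrix.mrangeRestrict
      ⟨fun _ _ h => toMatrix_injective (congrArg Subtype.val h),
        toMatrix.mrangeRestrict_surjective⟩).trans (MulEquiv.submonoidCongr mrange_toMatrix),
    rfl, rfl⟩
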